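/- Let T ∈ M₄(ℂ) be normal, and let a, b, c, d ∈ ℂ with a·d − b·c ≠ 0 be such that c·T + d·1 is invertible (equivalently, the Möbius map M(z) = (az+b)/(cz+d) is finite at every eigenvalue of T). Define M(T) = (a·T + b·1)·(c·T + d·1)⁻¹. If the NE and SW corners of T have equal rank, then the NE and SW corners of M(T) have equal rank; and if the NE and SW corners of T have equal operator norm, then the NE and SW corners of M(T) have equal operator norm. -/

import Mathlib

open Matrix

noncomputable def opN {n : ℕ} (M : Matrix (Fin n) (Fin n) ℂ) : ℝ :=
  ‖Matrix.toEuclideanCLM (𝕜 := ℂ) M‖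

/-- The NE (north-east) 2×2 corner of a 4×4 matrix. -/
def NE (T : Matrix (Fin 4) (Fin 4) ℂ) : Matrix (Fin 2) (Fin 2) ℂ :=
  ![![T 0 2, T 0 3], ![T 1 2, T 1 3]]

/-- The SW (south-west) 2×2 corner of a 4×4 matrix. -/
def SW (T : Matrix (Fin 4) (Fin 4) ℂ) : Matrix (Fin 2) (Fin 2) ℂ :=
  ![![T 2 0, T 2 1], ![T 3 0, T 3 1]]

/-!
Corners of `β • X + k • 1` are `β` times those of `X`, and for `c ≠ 0` the Möbius map is
`M(T) = β • (c • T + d • 1)⁻¹ + (a / c) • 1` with `β ≠ 0`; so it suffices to see that both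
properties of the corners pass from a normal invertible `W` to `V = W⁻¹`.
For the ranks this is the nullity theorem: if `W * V = 1` then `x ↦ V₂₂ x` maps `ker V₁₂`
injectively into `ker W₁₂`, and symmetrically.
For the norms: `‖X‖²` is the largest root of the characteristic polynomial of `Xᴴ * X`, so for
`2 × 2` matrices of equal Frobenius norm `‖X‖_F² = tr (Xᴴ * X)`, equal operator norms amount to
equal `|det X|`. Normality of `W` and of `V` equates the Frobenius norms of their two corners, and
Jacobi's complementary minor identity `det W * det V₁₂ = det W₁₂` (for `2 × 2` blocks) carries
`|det NE| = |det SW|` from `W` to `V`.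
-/

namespace Matrix

section Blocks

variable {α R K : Type*} [CommRing R] [Field K] {l m n o : Type*}

lemma toBlocks₁₂_transpose (M : Matrix (l ⊕ m) (n ⊕ o) α) : Mᵀ.toBlocks₁₂ = M.toBlocks₂₁ᵀ := rfl

lemma toBlocks₁₁_conjTranspose [Star α] (M : Matrix (l ⊕ m) (n ⊕ o) α) :
    Mᴴ.toBlocks₁₁ = M.toBlocks₁₁ᴴ := rfl

lemma toBlocks₁₂_conjTranspose [Star α] (M : Matrix (l ⊕ m) (n ⊕ o) α) :
    Mᴴ.toBlocks₁₂ = M.toBlocks₂₁ᴴ := rfl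

lemma toBlocks₂₁_conjTranspose [Star α] (M : Matrix (l ⊕ m) (n ⊕ o) α) :
    Mᴴ.toBlocks₂₁ = M.toBlocks₁₂ᴴ := rfl

lemma toBlocks₁₁_mul [Fintype n] [Fintype o] (M : Matrix (l ⊕ m) (n ⊕ o) R)
    (N : Matrix (n ⊕ o) (l ⊕ m) R) :
    (M * N).toBlocks₁₁ = M.toBlocks₁₁ * N.toBlocks₁₁ + M.toBlocks₁₂ * N.toBlocks₂₁ := by
  ext i j; simp [toBlocks₁₁, toBlocks₁₂, toBlocks₂₁, mul_apply, Fintype.sum_sum_type]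

lemma toBlocks₁₂_mul [Fintype n] [Fintype o] (M : Matrix (l ⊕ m) (n ⊕ o) R)
    (N : Matrix (n ⊕ o) (l ⊕ m) R) :
    (M * N).toBlocks₁₂ = M.toBlocks₁₁ * N.toBlocks₁₂ + M.toBlocks₁₂ * N.toBlocks₂₂ := by
  ext i j; simp [toBlocks₁₁, toBlocks₁₂, toBlocks₂₂, mul_apply, Fintype.sum_sum_type]

lemma toBlocks₂₂_mul [Fintype n] [Fintype o] (M : Matrix (l ⊕ m) (n ⊕ o) R)
    (N : Matrix (n ⊕ o) (l ⊕ m) R) :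
    (M * N).toBlocks₂₂ = M.toBlocks₂₁ * N.toBlocks₁₂ + M.toBlocks₂₂ * N.toBlocks₂₂ := by
  ext i j; simp [toBlocks₂₁, toBlocks₁₂, toBlocks₂₂, mul_apply, Fintype.sum_sum_type]

lemma rank_smul_of_ne_zero [Fintype n] {k : K} (hk : k ≠ 0) (B : Matrix m n K) :
    (k • B).rank = B.rank :=
  rank_smul_of_mem_nonZeroDivisors B (mem_nonZeroDivisors_of_ne_zero hk)

variable [Fintype m] [Fintype n]

lemma trace_conjTranspose_mul_toBlocks₁₂_eq [StarRing R] {W : Matrix (m ⊕ n) (m ⊕ n) R}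
    (hW : W * Wᴴ = Wᴴ * W) :
    (W.toBlocks₁₂ᴴ * W.toBlocks₁₂).trace = (W.toBlocks₂₁ᴴ * W.toBlocks₂₁).trace := by
  have h := congrArg (fun X => X.toBlocks₁₁.trace) hW
  simp only [toBlocks₁₁_mul, toBlocks₁₁_conjTranspose, toBlocks₁₂_conjTranspose,
    toBlocks₂₁_conjTranspose, trace_add] at h
  rw [trace_mul_comm W.toBlocks₁₁, trace_mul_comm W.toBlocks₁₂] at h
  linear_combination h

variable [DecidableEq m] [DecidableEq n]

lemma toBlocks_eq_of_mul_eq_one {M N : Matrix (m ⊕ n) (m ⊕ n) R} (h : M * N = 1) :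
    M.toBlocks₁₁ * N.toBlocks₁₂ + M.toBlocks₁₂ * N.toBlocks₂₂ = 0 ∧
      M.toBlocks₂₁ * N.toBlocks₁₂ + M.toBlocks₂₂ * N.toBlocks₂₂ = 1 := by
  rw [← fromBlocks_one] at h
  have h₁₂ := congrArg toBlocks₁₂ h
  have h₂₂ := congrArg toBlocks₂₂ h
  rw [toBlocks₁₂_mul, toBlocks_fromBlocks₁₂] at h₁₂
  rw [toBlocks₂₂_mul, toBlocks_fromBlocks₂₂] at h₂₂
  exact ⟨h₁₂, h₂₂⟩

lemma det_fromBlocks_zero₁₁_one₂₁ (B D : Matrix n n R) :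
    (fromBlocks 0 B (1 : Matrix n n R) D).det = (-1) ^ Fintype.card n * B.det := by
  have hfactor : fromBlocks 0 B (1 : Matrix n n R) D =
      fromBlocks 0 B 1 1 * fromBlocks 1 (D - 1) 0 1 := by
    simp [fromBlocks_multiply]
  rw [hfactor, det_mul, det_fromBlocks_one₂₂, det_fromBlocks_zero₂₁]
  simp [det_neg]

lemma det_mul_det_toBlocks₁₂_of_mul_eq_one {M N : Matrix (n ⊕ n) (n ⊕ n) R} (h : M * N = 1) :
    M.det * N.toBlocks₁₂.det = (-1) ^ Fintype.card n * M.toBlocks₁₂.det := by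
  obtain ⟨h₁₂, h₂₂⟩ := toBlocks_eq_of_mul_eq_one h
  have hfactor : M * fromBlocks N.toBlocks₁₂ 0 N.toBlocks₂₂ 1 =
      fromBlocks 0 M.toBlocks₁₂ 1 M.toBlocks₂₂ := by
    conv_lhs => rw [← fromBlocks_toBlocks M]
    rw [fromBlocks_multiply, h₁₂, h₂₂]
    simp
  rw [← det_fromBlocks_zero₁₁_one₂₁, ← hfactor, det_mul, det_fromBlocks_zero₁₂, det_one, mul_one]

lemma det_mul_det_toBlocks₂₁_of_mul_eq_one {M N : Matrix (n ⊕ n) (n ⊕ n) R} (h : M * N = 1) :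
    M.det * N.toBlocks₂₁.det = (-1) ^ Fintype.card n * M.toBlocks₂₁.det := by
  have hT : Mᵀ * Nᵀ = 1 := by rw [← transpose_mul, mul_eq_one_comm.mp h, transpose_one]
  simpa [toBlocks₁₂_transpose] using det_mul_det_toBlocks₁₂_of_mul_eq_one hT

lemma finrank_ker_toBlocks₁₂_le_of_mul_eq_one {M N : Matrix (m ⊕ n) (m ⊕ n) K} (h : M * N = 1) :
    Module.finrank K (LinearMap.ker N.toBlocks₁₂.mulVecLin) ≤
      Module.finrank K (LinearMap.ker M.toBlocks₁₂.mulVecLin) := by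
  obtain ⟨h₁₂, h₂₂⟩ := toBlocks_eq_of_mul_eq_one h
  set S := N.toBlocks₂₂
  have hmaps : ∀ x ∈ LinearMap.ker N.toBlocks₁₂.mulVecLin,
      S.mulVecLin x ∈ LinearMap.ker M.toBlocks₁₂.mulVecLin := by
    intro x hx
    simp only [LinearMap.mem_ker, mulVecLin_apply] at hx ⊢
    rw [mulVec_mulVec, eq_neg_of_add_eq_zero_right h₁₂, neg_mulVec, ← mulVec_mulVec, hx,
      mulVec_zero, neg_zero]
  refine LinearMap.finrank_le_finrank_of_injective (f := S.mulVecLin.restrict hmaps) ?_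
  rw [← LinearMap.ker_eq_bot, LinearMap.ker_eq_bot']
  rintro ⟨x, hx⟩ hSx
  simp only [LinearMap.mem_ker, mulVecLin_apply] at hx
  have hSx' : S *ᵥ x = 0 := congrArg Subtype.val hSx
  have hx_eq : x = M.toBlocks₂₁ *ᵥ (N.toBlocks₁₂ *ᵥ x) + M.toBlocks₂₂ *ᵥ (S *ᵥ x) := by
    rw [mulVec_mulVec, mulVec_mulVec, ← add_mulVec, h₂₂, one_mulVec]
  ext1
  simpa [hx, hSx'] using hx_eq

lemma rank_toBlocks₁₂_eq_of_mul_eq_one {M N : Matrix (m ⊕ n) (m ⊕ n) K} (h : M * N = 1) :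
    N.toBlocks₁₂.rank = M.toBlocks₁₂.rank := by
  have hle := finrank_ker_toBlocks₁₂_le_of_mul_eq_one h
  have hge := finrank_ker_toBlocks₁₂_le_of_mul_eq_one (mul_eq_one_comm.mp h)
  have hN := LinearMap.finrank_range_add_finrank_ker N.toBlocks₁₂.mulVecLin
  have hM := LinearMap.finrank_range_add_finrank_ker M.toBlocks₁₂.mulVecLin
  rw [rank, rank]
  omega

lemma rank_toBlocks₂₁_eq_of_mul_eq_one {M N : Matrix (m ⊕ n) (m ⊕ n) K} (h : M * N = 1) :
    N.toBlocks₂₁.rank = M.toBlocks₂₁.rank := by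
  have hT : Mᵀ * Nᵀ = 1 := by rw [← transpose_mul, mul_eq_one_comm.mp h, transpose_one]
  simpa [toBlocks₁₂_transpose, rank_transpose] using rank_toBlocks₁₂_eq_of_mul_eq_one hT

end Blocks

section Normal

variable {R : Type*} [CommRing R] [StarRing R] {n : Type*} [Fintype n] [DecidableEq n]
  {W : Matrix n n R}

lemma smul_add_smul_one_mul_conjTranspose_comm (hW : W * Wᴴ = Wᴴ * W) (c d : R) :
    (c • W + d • 1) * (c • W + d • 1)ᴴ = (c • W + d • 1)ᴴ * (c • W + d • 1) := by
  have hW' : Commute W Wᴴ := hW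
  rw [conjTranspose_add, conjTranspose_smul, conjTranspose_smul, conjTranspose_one]
  show Commute (c • W + d • 1) (star c • Wᴴ + star d • 1)
  refine .add_left (.add_right ?_ ?_) (.add_right ?_ ?_)
  · exact (hW'.smul_left _).smul_right _
  · exact ((Commute.one_right _).smul_left _).smul_right _
  · exact ((Commute.one_left _).smul_left _).smul_right _
  · exact ((Commute.one_left _).smul_left _).smul_right _

lemma inv_mul_conjTranspose_comm (hW : W * Wᴴ = Wᴴ * W) : W⁻¹ * W⁻¹ᴴ = W⁻¹ᴴ * W⁻¹ := by
  rw [conjTranspose_nonsing_inv, ← mul_inv_rev, ← mul_inv_rev, hW]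

end Normal

section Mobius

variable {K : Type*} [Field K] {n : Type*} [Fintype n] [DecidableEq n] (T : Matrix n n K)
  {a b c d : K}

lemma smul_add_smul_one_mul_inv_of_c_eq_zero (hd : d ≠ 0) :
    (a • T + b • 1) * ((0 : K) • T + d • 1)⁻¹ = (a / d) • T + (b / d) • 1 := by
  rw [zero_smul, zero_add, inv_eq_right_inv (B := d⁻¹ • 1) (by simp [hd]), Matrix.mul_smul,
    mul_one]
  module

lemma smul_add_smul_one_mul_inv_of_c_ne_zero (hc : c ≠ 0) (hW : IsUnit (c • T + d • 1)) :
    (a • T + b • 1) * (c • T + d • 1)⁻¹ =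
      ((b * c - a * d) / c) • (c • T + d • 1)⁻¹ + (a / c) • 1 := by
  have hsplit : a • T + b • 1 = (a / c) • (c • T + d • 1) + ((b * c - a * d) / c) • 1 := by
    match_scalars
    · field_simp
    · field_simp
      ring
  rw [hsplit, add_mul, smul_mul, smul_mul, one_mul,
    mul_nonsing_inv _ ((isUnit_iff_isUnit_det _).mp hW), add_comm]

end Mobius

end Matrix

section OperatorNorm

variable {n : ℕ}

lemma toEuclideanCLM_conjTranspose_mul_self (X : Matrix (Fin n) (Fin n) ℂ) :
    toEuclideanCLM (𝕜 := ℂ) (Xᴴ * X) =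
      star (toEuclideanCLM (𝕜 := ℂ) X) * toEuclideanCLM (𝕜 := ℂ) X := by
  rw [map_mul, ← map_star]
  rfl

lemma opN_smul (k : ℂ) (X : Matrix (Fin n) (Fin n) ℂ) : opN (k • X) = ‖k‖ * opN X := by
  rw [opN, map_smul, norm_smul, opN]

lemma opN_sq (X : Matrix (Fin n) (Fin n) ℂ) :
    opN X ^ 2 = ‖toEuclideanCLM (𝕜 := ℂ) (Xᴴ * X)‖ := by
  rw [toEuclideanCLM_conjTranspose_mul_self, opN, sq]
  exact CStarRing.norm_star_mul_self.symm

lemma opN_sq_mem_spectrum [NeZero n] (X : Matrix (Fin n) (Fin n) ℂ) :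
    ((opN X ^ 2 : ℝ) : ℂ) ∈ spectrum ℂ (Xᴴ * X) := by
  rw [opN_sq, ← AlgEquiv.spectrum_eq (toEuclideanCLM (𝕜 := ℂ) (n := Fin n)),
    toEuclideanCLM_conjTranspose_mul_self]
  exact spectrum.algebraMap_mem (R := ℝ) ℂ
    (CStarAlgebra.norm_mem_spectrum_of_nonneg (star_mul_self_nonneg _))

lemma opN_eq_of_spectrum_eq {X Y : Matrix (Fin n) (Fin n) ℂ}
    (h : spectrum ℂ (Xᴴ * X) = spectrum ℂ (Yᴴ * Y)) : opN X = opN Y := by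
  have hnorm (Z : Matrix (Fin n) (Fin n) ℂ) :
      (‖toEuclideanCLM (𝕜 := ℂ) (Zᴴ * Z)‖₊ : ENNReal) =
        ⨆ k ∈ spectrum ℂ (Zᴴ * Z), (‖k‖₊ : ENNReal) := by
    rw [toEuclideanCLM_conjTranspose_mul_self,
      ← (IsSelfAdjoint.star_mul_self _).spectralRadius_eq_nnnorm,
      ← toEuclideanCLM_conjTranspose_mul_self, spectralRadius, AlgEquiv.spectrum_eq]
  have hXY : ‖toEuclideanCLM (𝕜 := ℂ) (Xᴴ * X)‖₊ = ‖toEuclideanCLM (𝕜 := ℂ) (Yᴴ * Y)‖₊ :=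
    ENNReal.coe_inj.mp (by rw [hnorm X, hnorm Y, h])
  have hsq : opN X ^ 2 = opN Y ^ 2 := by
    rw [opN_sq, opN_sq, ← coe_nnnorm, hXY, coe_nnnorm]
  exact (pow_left_inj₀ (norm_nonneg _) (norm_nonneg _) two_ne_zero).mp hsq

lemma opN_eq_opN_iff_det_eq {X Y : Matrix (Fin 2) (Fin 2) ℂ}
    (htr : (Xᴴ * X).trace = (Yᴴ * Y).trace) :
    opN X = opN Y ↔ (Xᴴ * X).det = (Yᴴ * Y).det := by
  constructor
  · intro h
    have hX := opN_sq_mem_spectrum X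
    have hY := opN_sq_mem_spectrum Y
    simp only [mem_spectrum_iff_isRoot_charpoly, charpoly_fin_two, Polynomial.IsRoot.def,
      Polynomial.eval_add, Polynomial.eval_sub, Polynomial.eval_mul, Polynomial.eval_pow,
      Polynomial.eval_C, Polynomial.eval_X] at hX hY
    rw [h, htr] at hX
    linear_combination hX - hY
  · intro hdet
    refine opN_eq_of_spectrum_eq (Set.ext fun z => ?_)
    rw [mem_spectrum_iff_isRoot_charpoly, mem_spectrum_iff_isRoot_charpoly, charpoly_fin_two,
      charpoly_fin_two, htr, hdet]

end OperatorNorm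

section Corners

def cornerEquiv : Fin 4 ≃ Fin 2 ⊕ Fin 2 := (finSumFinEquiv (m := 2) (n := 2)).symm

lemma NE_eq_toBlocks₁₂ (T : Matrix (Fin 4) (Fin 4) ℂ) :
    NE T = (reindex cornerEquiv cornerEquiv T).toBlocks₁₂ := by
  ext i j; fin_cases i <;> fin_cases j <;> rfl

lemma SW_eq_toBlocks₂₁ (T : Matrix (Fin 4) (Fin 4) ℂ) :
    SW T = (reindex cornerEquiv cornerEquiv T).toBlocks₂₁ := by
  ext i j; fin_cases i <;> fin_cases j <;> rfl

lemma reindex_cornerEquiv_mul (X Y : Matrix (Fin 4) (Fin 4) ℂ) :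
    reindex cornerEquiv cornerEquiv X * reindex cornerEquiv cornerEquiv Y =
      reindex cornerEquiv cornerEquiv (X * Y) :=
  (map_mul (reindexAlgEquiv ℂ ℂ cornerEquiv) X Y).symm

lemma NE_smul_add_smul_one (β k : ℂ) (X : Matrix (Fin 4) (Fin 4) ℂ) :
    NE (β • X + k • 1) = β • NE X := by
  ext i j; fin_cases i <;> fin_cases j <;> simp [NE, one_apply] <;> rfl

lemma SW_smul_add_smul_one (β k : ℂ) (X : Matrix (Fin 4) (Fin 4) ℂ) :
    SW (β • X + k • 1) = β • SW X := by
  ext i j; fin_cases i <;> fin_cases j <;> simp [SW, one_apply] <;> rfl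

lemma trace_conjTranspose_mul_NE_eq {T : Matrix (Fin 4) (Fin 4) ℂ} (hT : T * Tᴴ = Tᴴ * T) :
    ((NE T)ᴴ * NE T).trace = ((SW T)ᴴ * SW T).trace := by
  rw [NE_eq_toBlocks₁₂, SW_eq_toBlocks₂₁]
  refine trace_conjTranspose_mul_toBlocks₁₂_eq ?_
  rw [conjTranspose_reindex, reindex_cornerEquiv_mul, reindex_cornerEquiv_mul, hT]

variable {W V : Matrix (Fin 4) (Fin 4) ℂ}

lemma reindex_cornerEquiv_mul_eq_one (h : W * V = 1) :
    reindex cornerEquiv cornerEquiv W * reindex cornerEquiv cornerEquiv V = 1 := by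
  rw [reindex_cornerEquiv_mul, h]
  exact map_one (reindexAlgEquiv ℂ ℂ cornerEquiv)

lemma rank_NE_eq_of_mul_eq_one (h : W * V = 1) : (NE V).rank = (NE W).rank := by
  rw [NE_eq_toBlocks₁₂, NE_eq_toBlocks₁₂]
  exact rank_toBlocks₁₂_eq_of_mul_eq_one (reindex_cornerEquiv_mul_eq_one h)

lemma rank_SW_eq_of_mul_eq_one (h : W * V = 1) : (SW V).rank = (SW W).rank := by
  rw [SW_eq_toBlocks₂₁, SW_eq_toBlocks₂₁]
  exact rank_toBlocks₂₁_eq_of_mul_eq_one (reindex_cornerEquiv_mul_eq_one h)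

lemma det_mul_det_NE_of_mul_eq_one (h : W * V = 1) : W.det * (NE V).det = (NE W).det := by
  rw [NE_eq_toBlocks₁₂, NE_eq_toBlocks₁₂, ← det_reindex_self cornerEquiv W,
    det_mul_det_toBlocks₁₂_of_mul_eq_one (reindex_cornerEquiv_mul_eq_one h)]
  simp

lemma det_mul_det_SW_of_mul_eq_one (h : W * V = 1) : W.det * (SW V).det = (SW W).det := by
  rw [SW_eq_toBlocks₂₁, SW_eq_toBlocks₂₁, ← det_reindex_self cornerEquiv W,
    det_mul_det_toBlocks₂₁_of_mul_eq_one (reindex_cornerEquiv_mul_eq_one h)]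
  simp

lemma opN_NE_eq_opN_SW_of_mul_eq_one (h : W * V = 1) (hW : W * Wᴴ = Wᴴ * W)
    (hV : V * Vᴴ = Vᴴ * V) (hWc : opN (NE W) = opN (SW W)) : opN (NE V) = opN (SW V) := by
  rw [opN_eq_opN_iff_det_eq (trace_conjTranspose_mul_NE_eq hV)]
  rw [opN_eq_opN_iff_det_eq (trace_conjTranspose_mul_NE_eq hW)] at hWc
  have hdet : star W.det * W.det ≠ 0 := by
    have : W.det ≠ 0 := left_ne_zero_of_mul_eq_one (by rw [← det_mul, h, det_one])
    simpa using this
  simp only [det_mul, det_conjTranspose] at hWc ⊢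
  rw [← det_mul_det_NE_of_mul_eq_one h, ← det_mul_det_SW_of_mul_eq_one h, star_mul,
    star_mul] at hWc
  apply mul_left_cancel₀ hdet
  linear_combination hWc

end Corners

theorem stmt6 (T : Matrix (Fin 4) (Fin 4) ℂ)
    (hnormal : T * Tᴴ = Tᴴ * T)
    (a b c d : ℂ) (hdet : a * d - b * c ≠ 0)
    (hinv : IsUnit (c • T + d • (1 : Matrix (Fin 4) (Fin 4) ℂ)))
    (MT : Matrix (Fin 4) (Fin 4) ℂ)
    (hMT : MT = (a • T + b • 1) * (c • T + d • (1 : Matrix (Fin 4) (Fin 4) ℂ))⁻¹) :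
    ((NE T).rank = (SW T).rank → (NE MT).rank = (SW MT).rank) ∧
    (opN (NE T) = opN (SW T) → opN (NE MT) = opN (SW MT)) := by
  rcases eq_or_ne c 0 with rfl | hc
  · obtain ⟨ha, hd⟩ : a ≠ 0 ∧ d ≠ 0 := by simpa using hdet
    rw [hMT, smul_add_smul_one_mul_inv_of_c_eq_zero T hd, NE_smul_add_smul_one,
      SW_smul_add_smul_one, opN_smul, opN_smul, rank_smul_of_ne_zero (div_ne_zero ha hd),
      rank_smul_of_ne_zero (div_ne_zero ha hd)]
    exact ⟨id, fun h => by rw [h]⟩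
  · have hβ : (b * c - a * d) / c ≠ 0 := div_ne_zero (fun h => hdet (by linear_combination -h)) hc
    rw [hMT, smul_add_smul_one_mul_inv_of_c_ne_zero T hc hinv, NE_smul_add_smul_one,
      SW_smul_add_smul_one, opN_smul, opN_smul, rank_smul_of_ne_zero hβ, rank_smul_of_ne_zero hβ]
    set W := c • T + d • 1
    have hWW : W * W⁻¹ = 1 := mul_nonsing_inv W ((isUnit_iff_isUnit_det W).mp hinv)
    have hWn : W * Wᴴ = Wᴴ * W := smul_add_smul_one_mul_conjTranspose_comm hnormal c d
    have hNE : NE W = c • NE T := NE_smul_add_smul_one c d T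
    have hSW : SW W = c • SW T := SW_smul_add_smul_one c d T
    refine ⟨fun h => ?_, fun h => ?_⟩
    · rw [rank_NE_eq_of_mul_eq_one hWW, rank_SW_eq_of_mul_eq_one hWW, hNE, hSW,
        rank_smul_of_ne_zero hc, rank_smul_of_ne_zero hc, h]
    · rw [opN_NE_eq_opN_SW_of_mul_eq_one hWW hWn (inv_mul_conjTranspose_comm hWn)]
      rw [hNE, hSW, opN_smul, opN_smul, h]
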